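/- arXiv:1809.03067 — 9 statements merged into one kernel-verified Lean document; each statement's English description precedes it below -/
import Mathlib

section
/- In any magic square of squares, the central value e satisfies |e| > 2; in particular, there exists a prime p dividing e. -/
/-- A magic square of squares: integers `a,…,i` whose squares, arranged in a
3×3 grid with rows `(a²,b²,c²)`, `(d²,e²,f²)`, `(g²,h²,i²)`, are pairwise
distinct and all rows, columns and both main diagonals sum to `T`. -/
def IsMagicSquareOfSquares (a b c d e f g h i T : ℤ) : Prop :=
  ([a^2, b^2, c^2, d^2, e^2, f^2, g^2, h^2, i^2] : List ℤ).Pairwise (· ≠ ·) ∧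
  a^2 + b^2 + c^2 = T ∧ d^2 + e^2 + f^2 = T ∧ g^2 + h^2 + i^2 = T ∧
  a^2 + d^2 + g^2 = T ∧ b^2 + e^2 + h^2 = T ∧ c^2 + f^2 + i^2 = T ∧
  a^2 + e^2 + i^2 = T ∧ c^2 + e^2 + g^2 = T

/-- A magic square of squares is primitive if the gcd of its nine entries is 1. -/
def IsPrimitive (a b c d e f g h i : ℤ) : Prop :=
  Int.gcd (a^2) (Int.gcd (b^2) (Int.gcd (c^2) (Int.gcd (d^2) (Int.gcd (e^2)
    (Int.gcd (f^2) (Int.gcd (g^2) (Int.gcd (h^2) (i^2)))))))) = 1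

theorem center_gt_two_and_has_prime_divisor (a b c d e f g h i T : ℤ)
    (hms : IsMagicSquareOfSquares a b c d e f g h i T) :
    2 < |e| ∧ ∃ p : ℕ, p.Prime ∧ (p : ℤ) ∣ e := by
  obtain ⟨hp, h1, h2, h3, h4, h5, h6, h7, h8⟩ := hms
  simp [List.pairwise_cons] at hp
  have hae : a^2 ≠ e^2 := hp.1.2.2.2.1
  have hei : e^2 ≠ i^2 := hp.2.2.2.2.1.2.2.2
  have key : a^2 + i^2 = 2 * e^2 := by linarith
  clear hp h1 h2 h3 h4 h5 h6 h7 h8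
  clear b c d f g h T
  have h9 : 9 ≤ e^2 := by
    by_contra hlt
    push_neg at hlt
    have he : -2 ≤ e ∧ e ≤ 2 := by constructor <;> nlinarith
    have ha : -2 ≤ a ∧ a ≤ 2 := by constructor <;> nlinarith [sq_nonneg i]
    have hi : -2 ≤ i ∧ i ≤ 2 := by constructor <;> nlinarith [sq_nonneg a]
    obtain ⟨he1, he2⟩ := he; obtain ⟨ha1, ha2⟩ := ha; obtain ⟨hi1, hi2⟩ := hi
    clear hlt
    interval_cases e <;> interval_cases a <;> interval_cases i <;> omega
  have habs : 2 < |e| := by nlinarith [sq_abs e, abs_nonneg e]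
  refine ⟨habs, ?_⟩
  have hne : e.natAbs ≠ 1 := by
    rw [Int.abs_eq_natAbs] at habs
    omega
  obtain ⟨p, pp, hpd⟩ := Nat.exists_prime_and_dvd hne
  exact ⟨p, pp, dvd_trans (Int.natCast_dvd_natCast.mpr hpd) (Int.natAbs_dvd.mpr dvd_rfl)⟩
end

section
/- If p is a prime dividing the central value e of a primitive magic square of squares, then p = 2 or p ≡ 1 (mod 4). -/
theorem Int.dvd_right_of_dvd_sq_add_sq {p : ℕ} [Fact p.Prime] (hp : p % 4 = 3) {x y : ℤ}
    (h : (p : ℤ) ∣ x ^ 2 + y ^ 2) : (p : ℤ) ∣ y := by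
  by_contra hy
  have hy' : (y : ZMod p) ≠ 0 := by rwa [Ne, ZMod.intCast_zmod_eq_zero_iff_dvd]
  have hxy : (x : ZMod p) ^ 2 = -(y : ZMod p) ^ 2 := by
    have := (ZMod.intCast_zmod_eq_zero_iff_dvd _ p).2 h
    push_cast at this
    linear_combination this
  exact ZMod.mod_four_ne_three_of_sq_eq_neg_sq' hy' hxy hp

theorem Int.dvd_of_dvd_sq_add_sq {p : ℕ} [Fact p.Prime] (hp : p % 4 = 3) {x y : ℤ}
    (h : (p : ℤ) ∣ x ^ 2 + y ^ 2) : (p : ℤ) ∣ x ∧ (p : ℤ) ∣ y :=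
  ⟨Int.dvd_right_of_dvd_sq_add_sq hp (add_comm (x ^ 2) _ ▸ h), Int.dvd_right_of_dvd_sq_add_sq hp h⟩

namespace IsMagicSquareOfSquares

variable {a b c d e f g h i T : ℤ}

theorem magic_sum_eq_three_mul_sq_center (hms : IsMagicSquareOfSquares a b c d e f g h i T) :
    T = 3 * e ^ 2 := by
  obtain ⟨-, h₁, h₂, h₃, -, h₅, -, h₇, h₈⟩ := hms
  linarith

theorem opposite_sq_add_sq_eq_two_mul_sq_center (hms : IsMagicSquareOfSquares a b c d e f g h i T) :
    a ^ 2 + i ^ 2 = 2 * e ^ 2 ∧ b ^ 2 + h ^ 2 = 2 * e ^ 2 ∧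
      c ^ 2 + g ^ 2 = 2 * e ^ 2 ∧ d ^ 2 + f ^ 2 = 2 * e ^ 2 := by
  have hT := hms.magic_sum_eq_three_mul_sq_center
  obtain ⟨-, -, h₂, -, -, h₅, -, h₇, h₈⟩ := hms
  refine ⟨?_, ?_, ?_, ?_⟩ <;> linarith

end IsMagicSquareOfSquares

theorem IsPrimitive.isUnit_of_dvd {a b c d e f g h i n : ℤ} (hprim : IsPrimitive a b c d e f g h i)
    (ha : n ∣ a) (hb : n ∣ b) (hc : n ∣ c) (hd : n ∣ d) (he : n ∣ e) (hf : n ∣ f) (hg : n ∣ g)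
    (hh : n ∣ h) (hi : n ∣ i) : IsUnit n := by
  have sq {x : ℤ} (hx : n ∣ x) : n ∣ x ^ 2 := dvd_pow hx two_ne_zero
  have hgcd := Int.dvd_coe_gcd (sq ha) <| Int.dvd_coe_gcd (sq hb) <| Int.dvd_coe_gcd (sq hc) <|
    Int.dvd_coe_gcd (sq hd) <| Int.dvd_coe_gcd (sq he) <| Int.dvd_coe_gcd (sq hf) <|
    Int.dvd_coe_gcd (sq hg) <| Int.dvd_coe_gcd (sq hh) (sq hi)
  rw [hprim, Nat.cast_one] at hgcd
  exact isUnit_of_dvd_one hgcd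

theorem prime_div_center_eq_two_or_one_mod_four (a b c d e f g h i T : ℤ)
    (hms : IsMagicSquareOfSquares a b c d e f g h i T)
    (hprim : IsPrimitive a b c d e f g h i)
    (p : ℕ) (hp : p.Prime) (hdvd : (p : ℤ) ∣ e) :
    p = 2 ∨ p % 4 = 1 := by
  have := Fact.mk hp
  rcases hp.eq_two_or_odd with h2 | hodd
  · exact Or.inl h2
  refine Or.inr ((Nat.odd_mod_four_iff.mp hodd).resolve_right ?_)
  intro h3
  have h2e : (p : ℤ) ∣ 2 * e ^ 2 := (dvd_pow hdvd two_ne_zero).mul_left 2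
  obtain ⟨hai, hbh, hcg, hdf⟩ := hms.opposite_sq_add_sq_eq_two_mul_sq_center
  obtain ⟨ha, hi⟩ := Int.dvd_of_dvd_sq_add_sq h3 (hai ▸ h2e)
  obtain ⟨hb, hh⟩ := Int.dvd_of_dvd_sq_add_sq h3 (hbh ▸ h2e)
  obtain ⟨hc, hg⟩ := Int.dvd_of_dvd_sq_add_sq h3 (hcg ▸ h2e)
  obtain ⟨hd, hf⟩ := Int.dvd_of_dvd_sq_add_sq h3 (hdf ▸ h2e)
  exact (Nat.prime_iff_prime_int.mp hp).not_isUnit <|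
    hprim.isUnit_of_dvd ha hb hc hd hdvd hf hg hh hi
end

section
/- Let p be a prime with p ≡ 1 (mod 4) dividing both the central value e and the corner value a of a primitive magic square of squares. Then p also divides the opposite corner value i, and modulo p one has b ≢ 0, with the congruences c² ≡ −b², d² ≡ −b², h² ≡ −b², f² ≡ b², and g² ≡ b² (mod p). -/
/-!
Reducing the square mod `p` gives a 3×3 magic square over `𝔽_p` with `a² = e² = 0`. Every
3×3 magic square is determined by its entries `A`, `B`, `E`, with magic sum `3E`, so here the
magic sum and `i²` vanish and the remaining entries are `±b²`. If also `p ∣ b`, then `p`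
divides all nine squares, against primitivity.
-/

def IsMagicSquare {R : Type*} [CommRing R] (A B C D E F G H I T : R) : Prop :=
  A + B + C = T ∧ D + E + F = T ∧ G + H + I = T ∧
  A + D + G = T ∧ B + E + H = T ∧ C + F + I = T ∧
  A + E + I = T ∧ C + E + G = T

namespace IsMagicSquare

variable {R : Type*} [CommRing R] {A B C D E F G H I T : R}

theorem magic_sum_eq (hm : IsMagicSquare A B C D E F G H I T) : T = 3 * E := by
  obtain ⟨h₁, h₂, h₃, -, h₅, -, h₇, h₈⟩ := hm
  -- middle row + middle column + both diagonals cover the grid once and the centre four times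
  linear_combination h₁ + h₂ + h₃ - h₂ - h₅ - h₇ - h₈

theorem eq_parametrization (hm : IsMagicSquare A B C D E F G H I T) :
    T = 3 * E ∧ C = 3 * E - A - B ∧ D = 4 * E - 2 * A - B ∧ F = 2 * A + B - 2 * E ∧
      G = A + B - E ∧ H = 2 * E - B ∧ I = 2 * E - A := by
  have hT := hm.magic_sum_eq
  obtain ⟨h₁, -, -, h₄, h₅, h₆, h₇, h₈⟩ := hm
  refine ⟨hT, ?_, ?_, ?_, ?_, ?_, ?_⟩
  · linear_combination h₁ + hT
  · linear_combination h₄ - h₈ + h₁ + hT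
  · linear_combination h₆ - h₁ - h₇ - hT
  · linear_combination h₈ - h₁
  · linear_combination h₅ + hT
  · linear_combination h₇ + hT

theorem map {S : Type*} [CommRing S] (hm : IsMagicSquare A B C D E F G H I T) (φ : R →+ S) :
    IsMagicSquare (φ A) (φ B) (φ C) (φ D) (φ E) (φ F) (φ G) (φ H) (φ I) (φ T) := by
  obtain ⟨h₁, h₂, h₃, h₄, h₅, h₆, h₇, h₈⟩ := hm
  simp only [IsMagicSquare, ← map_add, h₁, h₂, h₃, h₄, h₅, h₆, h₇, h₈, and_self]

end IsMagicSquare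

theorem IsMagicSquareOfSquares.isMagicSquare {a b c d e f g h i T : ℤ}
    (hms : IsMagicSquareOfSquares a b c d e f g h i T) :
    IsMagicSquare (a ^ 2) (b ^ 2) (c ^ 2) (d ^ 2) (e ^ 2) (f ^ 2) (g ^ 2) (h ^ 2) (i ^ 2) T :=
  hms.2

theorem IsPrimitive.isUnit_of_dvd_sq {a b c d e f g h i n : ℤ}
    (hprim : IsPrimitive a b c d e f g h i) (ha : n ∣ a ^ 2) (hb : n ∣ b ^ 2) (hc : n ∣ c ^ 2)
    (hd : n ∣ d ^ 2) (he : n ∣ e ^ 2) (hf : n ∣ f ^ 2) (hg : n ∣ g ^ 2) (hh : n ∣ h ^ 2)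
    (hi : n ∣ i ^ 2) : IsUnit n := by
  refine isUnit_of_dvd_one ?_
  have := Int.dvd_coe_gcd ha <| Int.dvd_coe_gcd hb <| Int.dvd_coe_gcd hc <|
    Int.dvd_coe_gcd hd <| Int.dvd_coe_gcd he <| Int.dvd_coe_gcd hf <| Int.dvd_coe_gcd hg <|
    Int.dvd_coe_gcd hh hi
  rwa [hprim] at this

theorem corner_zero_residue_class_general (a b c d e f g h i T : ℤ)
    (hms : IsMagicSquareOfSquares a b c d e f g h i T)
    (hprim : IsPrimitive a b c d e f g h i)
    (p : ℕ) (hp : p.Prime)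
    (hde : (p : ℤ) ∣ e) (hda : (p : ℤ) ∣ a) :
    (p : ℤ) ∣ i ∧ (b : ZMod p) ≠ 0 ∧
    (c : ZMod p)^2 = -(b : ZMod p)^2 ∧
    (d : ZMod p)^2 = -(b : ZMod p)^2 ∧
    (h : ZMod p)^2 = -(b : ZMod p)^2 ∧
    (f : ZMod p)^2 = (b : ZMod p)^2 ∧
    (g : ZMod p)^2 = (b : ZMod p)^2 := by
  have : Fact p.Prime := ⟨hp⟩
  have hcast (x : ℤ) : (x : ZMod p) = 0 ↔ (p : ℤ) ∣ x := ZMod.intCast_zmod_eq_zero_iff_dvd x p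
  have ha := (hcast a).mpr hda
  have he := (hcast e).mpr hde
  have hmod := hms.isMagicSquare.map (Int.castAddHom (ZMod p))
  simp only [Int.coe_castAddHom, Int.cast_pow] at hmod
  obtain ⟨-, hc, hd, hf, hg, hh, hi⟩ := hmod.eq_parametrization
  simp only [ha, he, ne_eq, OfNat.ofNat_ne_zero, not_false_eq_true, zero_pow, mul_zero,
    zero_sub, sub_zero, zero_add] at hc hd hf hg hh hi
  refine ⟨(hcast i).mp (pow_eq_zero_iff two_ne_zero |>.mp hi), fun hb ↦ ?_,
    hc, hd, hh, hf, hg⟩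
  have hsq (x : ℤ) (hx : (x : ZMod p) ^ 2 = 0) : (p : ℤ) ∣ x ^ 2 :=
    (hcast _).mp (by push_cast; exact hx)
  simp only [hb, ne_eq, OfNat.ofNat_ne_zero, not_false_eq_true, zero_pow, neg_zero]
    at hc hd hf hg hh
  exact (Nat.prime_iff_prime_int.mp hp).not_isUnit <| hprim.isUnit_of_dvd_sq
    (hsq a (by simp [ha])) (hsq b (by simp [hb])) (hsq c hc) (hsq d hd) (hsq e (by simp [he]))
    (hsq f hf) (hsq g hg) (hsq h hh) (hsq i hi)

theorem corner_zero_residue_class (a b c d e f g h i T : ℤ)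
    (hms : IsMagicSquareOfSquares a b c d e f g h i T)
    (hprim : IsPrimitive a b c d e f g h i)
    (p : ℕ) (hp : p.Prime) (hp1 : p % 4 = 1)
    (hde : (p : ℤ) ∣ e) (hda : (p : ℤ) ∣ a) :
    (p : ℤ) ∣ i ∧ (b : ZMod p) ≠ 0 ∧
    (c : ZMod p)^2 = -(b : ZMod p)^2 ∧
    (d : ZMod p)^2 = -(b : ZMod p)^2 ∧
    (h : ZMod p)^2 = -(b : ZMod p)^2 ∧
    (f : ZMod p)^2 = (b : ZMod p)^2 ∧
    (g : ZMod p)^2 = (b : ZMod p)^2 :=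
  corner_zero_residue_class_general a b c d e f g h i T hms hprim p hp hde hda
end

section
/- If a prime p with p ≡ 5 (mod 8) divides the central value e of a primitive magic square of squares, then p divides none of the mid-edge values b, d, f, h. -/
/-!
Reduce modulo `p`. The line sums give `T = 3e²`, so `e ≡ 0` forces `T ≡ 0`; if also `b ≡ 0`, the
first row, first column and anti-diagonal give `d² ≡ 2c²`. As `2` is not a square modulo a prime
`p ≡ 5 (mod 8)`, this forces `c ≡ 0`, and then every entry vanishes modulo `p`, contradicting
primitivity. The other mid-edge entries reduce to `b` by the symmetries of the square.
-/

/-- The line equations of `IsMagicSquareOfSquares`, without distinctness and over an arbitrary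
commutative ring, so that they survive reduction modulo `p`. -/
structure MagicSums {R : Type*} [CommRing R] (a b c d e f g h i T : R) : Prop where
  row₁ : a ^ 2 + b ^ 2 + c ^ 2 = T
  row₂ : d ^ 2 + e ^ 2 + f ^ 2 = T
  row₃ : g ^ 2 + h ^ 2 + i ^ 2 = T
  col₁ : a ^ 2 + d ^ 2 + g ^ 2 = T
  col₂ : b ^ 2 + e ^ 2 + h ^ 2 = T
  col₃ : c ^ 2 + f ^ 2 + i ^ 2 = T
  diag : a ^ 2 + e ^ 2 + i ^ 2 = T
  antidiag : c ^ 2 + e ^ 2 + g ^ 2 = T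

theorem IsMagicSquareOfSquares.magicSums {a b c d e f g h i T : ℤ}
    (hms : IsMagicSquareOfSquares a b c d e f g h i T) : MagicSums a b c d e f g h i T :=
  let ⟨_, row₁, row₂, row₃, col₁, col₂, col₃, diag, antidiag⟩ := hms
  ⟨row₁, row₂, row₃, col₁, col₂, col₃, diag, antidiag⟩

namespace MagicSums

section CommRing

variable {R : Type*} [CommRing R] {a b c d e f g h i T : R}

theorem transpose (hs : MagicSums a b c d e f g h i T) : MagicSums a d g b e h c f i T :=
  ⟨hs.col₁, hs.col₂, hs.col₃, hs.row₁, hs.row₂, hs.row₃, hs.diag,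
    by linear_combination hs.antidiag⟩

theorem flipRows (hs : MagicSums a b c d e f g h i T) : MagicSums g h i d e f a b c T :=
  ⟨hs.row₃, hs.row₂, hs.row₁, by linear_combination hs.col₁, by linear_combination hs.col₂,
    by linear_combination hs.col₃, by linear_combination hs.antidiag,
    by linear_combination hs.diag⟩

theorem map {S : Type*} [CommRing S] (φ : R →+* S) (hs : MagicSums a b c d e f g h i T) :
    MagicSums (φ a) (φ b) (φ c) (φ d) (φ e) (φ f) (φ g) (φ h) (φ i) (φ T) := by
  constructor <;> simp only [← map_pow, ← map_add]
  exacts [congrArg φ hs.row₁, congrArg φ hs.row₂, congrArg φ hs.row₃, congrArg φ hs.col₁,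
    congrArg φ hs.col₂, congrArg φ hs.col₃, congrArg φ hs.diag, congrArg φ hs.antidiag]

theorem magic_const (hs : MagicSums a b c d e f g h i T) : T = 3 * e ^ 2 := by
  linear_combination hs.row₁ + hs.row₃ - hs.col₂ - hs.diag - hs.antidiag

end CommRing

section Field

variable {K : Type*} [Field K] {a b c d e f g h i T : K}

theorem eq_zero_of_center_eq_zero_of_top_eq_zero (h2 : ¬IsSquare (2 : K))
    (hs : MagicSums a b c d e f g h i T) (he : e = 0) (hb : b = 0) :
    a = 0 ∧ c = 0 ∧ d = 0 ∧ f = 0 ∧ g = 0 ∧ h = 0 ∧ i = 0 := by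
  have hT : T = 0 := by rw [hs.magic_const, he]; ring
  subst he hb hT
  have hc : c = 0 := by
    by_contra hc
    have hd : d ^ 2 = 2 * c ^ 2 := by linear_combination hs.col₁ - hs.row₁ - hs.antidiag
    exact h2 ⟨d / c, by field_simp; linear_combination -hd⟩
  subst hc
  have ha : a = 0 := pow_eq_zero_iff two_ne_zero |>.mp (by linear_combination hs.row₁)
  have hg : g = 0 := pow_eq_zero_iff two_ne_zero |>.mp (by linear_combination hs.antidiag)
  have hi : i = 0 := pow_eq_zero_iff two_ne_zero |>.mp (by linear_combination hs.diag - hs.row₁)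
  subst ha hg hi
  have hd : d = 0 := pow_eq_zero_iff two_ne_zero |>.mp (by linear_combination hs.col₁)
  have hf : f = 0 := pow_eq_zero_iff two_ne_zero |>.mp (by linear_combination hs.col₃)
  have hh : h = 0 := pow_eq_zero_iff two_ne_zero |>.mp (by linear_combination hs.col₂)
  exact ⟨rfl, rfl, hd, hf, rfl, hh, rfl⟩

theorem eq_zero_of_center_eq_zero_of_midedge_eq_zero (h2 : ¬IsSquare (2 : K))
    (hs : MagicSums a b c d e f g h i T) (he : e = 0)
    (hm : b = 0 ∨ d = 0 ∨ f = 0 ∨ h = 0) :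
    a = 0 ∧ b = 0 ∧ c = 0 ∧ d = 0 ∧ f = 0 ∧ g = 0 ∧ h = 0 ∧ i = 0 := by
  rcases hm with hb | hd | hf | hh
  · obtain ⟨ha, hc, hd, hf, hg, hh, hi⟩ := hs.eq_zero_of_center_eq_zero_of_top_eq_zero h2 he hb
    exact ⟨ha, hb, hc, hd, hf, hg, hh, hi⟩
  · obtain ⟨ha, hg, hb, hh, hc, hf, hi⟩ :=
      hs.transpose.eq_zero_of_center_eq_zero_of_top_eq_zero h2 he hd
    exact ⟨ha, hb, hc, hd, hf, hg, hh, hi⟩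
  · obtain ⟨hc, hi, hb, hh, ha, hd, hg⟩ :=
      hs.transpose.flipRows.eq_zero_of_center_eq_zero_of_top_eq_zero h2 he hf
    exact ⟨ha, hb, hc, hd, hf, hg, hh, hi⟩
  · obtain ⟨hg, hi, hd, hf, ha, hb, hc⟩ :=
      hs.flipRows.eq_zero_of_center_eq_zero_of_top_eq_zero h2 he hh
    exact ⟨ha, hb, hc, hd, hf, hg, hh, hi⟩

end Field

end MagicSums

theorem IsPrimitive.eq_one_of_dvd {a b c d e f g h i : ℤ} (hprim : IsPrimitive a b c d e f g h i)
    {n : ℕ} (ha : (n : ℤ) ∣ a) (hb : (n : ℤ) ∣ b) (hc : (n : ℤ) ∣ c) (hd : (n : ℤ) ∣ d)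
    (he : (n : ℤ) ∣ e) (hf : (n : ℤ) ∣ f) (hg : (n : ℤ) ∣ g) (hh : (n : ℤ) ∣ h)
    (hi : (n : ℤ) ∣ i) : n = 1 := by
  have hsq {x : ℤ} (hx : (n : ℤ) ∣ x) : (n : ℤ) ∣ x ^ 2 := dvd_pow hx two_ne_zero
  have hgcd : (n : ℤ) ∣ (1 : ℕ) := hprim ▸
    Int.dvd_coe_gcd (hsq ha) (Int.dvd_coe_gcd (hsq hb) (Int.dvd_coe_gcd (hsq hc)
      (Int.dvd_coe_gcd (hsq hd) (Int.dvd_coe_gcd (hsq he) (Int.dvd_coe_gcd (hsq hf)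
        (Int.dvd_coe_gcd (hsq hg) (Int.dvd_coe_gcd (hsq hh) (hsq hi))))))))
  exact Nat.dvd_one.mp (Int.natCast_dvd_natCast.mp hgcd)

theorem five_mod_eight_no_midedge (a b c d e f g h i T : ℤ)
    (hms : IsMagicSquareOfSquares a b c d e f g h i T)
    (hprim : IsPrimitive a b c d e f g h i)
    (p : ℕ) (hp : p.Prime) (hp5 : p % 8 = 5) (hde : (p : ℤ) ∣ e) :
    ¬ (p : ℤ) ∣ b ∧ ¬ (p : ℤ) ∣ d ∧ ¬ (p : ℤ) ∣ f ∧ ¬ (p : ℤ) ∣ h := by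
  have := Fact.mk hp
  have h2 : ¬IsSquare (2 : ZMod p) := by
    rw [ZMod.exists_sq_eq_two_iff (by omega)]
    omega
  have hs := hms.magicSums.map (Int.castRingHom (ZMod p))
  simp only [eq_intCast] at hs
  suffices ¬((p : ℤ) ∣ b ∨ (p : ℤ) ∣ d ∨ (p : ℤ) ∣ f ∨ (p : ℤ) ∣ h) by tauto
  simp only [← ZMod.intCast_zmod_eq_zero_iff_dvd] at hde ⊢
  intro hm
  obtain ⟨ha, hb, hc, hd, hf, hg, hh, hi⟩ :=
    hs.eq_zero_of_center_eq_zero_of_midedge_eq_zero h2 hde hm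
  simp only [ZMod.intCast_zmod_eq_zero_iff_dvd] at ha hb hc hd hde hf hg hh hi
  exact hp.one_lt.ne' (hprim.eq_one_of_dvd ha hb hc hd hde hf hg hh hi)
end

section
/- Let p be a prime with p ≡ 1 (mod 4) dividing both the central value e and the mid-edge value b of a primitive magic square of squares. Then p ≡ 1 (mod 8), p also divides the opposite mid-edge value h, and modulo p one has a ≢ 0, with the congruences c² ≡ −a², i² ≡ −a², g² ≡ a², d² ≡ −2a², and f² ≡ 2a² (mod p). -/
/-!
The four lines through the centre cover every cell once and the centre three more times, so
`4T = 3T + 3e²`, i.e. `T = 3e²`. Hence modulo `p` every line of squares sums to `0`, and with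
`b ≡ e ≡ 0` the lines express each square as `0`, `±a²` or `±2a²`. Primitivity then forces
`a ≢ 0`, and `f² ≡ 2a²` makes `2` a quadratic residue mod `p`, which for `p ≡ 1 (mod 4)`
means `p ≡ 1 (mod 8)`.
-/

def IsZeroSumSquareGrid {R : Type*} [CommRing R] (a b c d e f g h i : R) : Prop :=
  a^2 + b^2 + c^2 = 0 ∧ d^2 + e^2 + f^2 = 0 ∧ g^2 + h^2 + i^2 = 0 ∧
  a^2 + d^2 + g^2 = 0 ∧ b^2 + e^2 + h^2 = 0 ∧ c^2 + f^2 + i^2 = 0 ∧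
  a^2 + e^2 + i^2 = 0 ∧ c^2 + e^2 + g^2 = 0

theorem IsZeroSumSquareGrid.sq_eq_of_center_eq_zero_of_top_eq_zero {R : Type*} [CommRing R]
    {a b c d e f g h i : R} (hz : IsZeroSumSquareGrid a b c d e f g h i) (he : e = 0)
    (hb : b = 0) :
    h^2 = 0 ∧ c^2 = -a^2 ∧ i^2 = -a^2 ∧ g^2 = a^2 ∧ d^2 = -(2 * a^2) ∧ f^2 = 2 * a^2 := by
  obtain ⟨r1, r2, -, c1, c2, -, dg, ad⟩ := hz
  subst he hb
  have hc : c^2 = -a^2 := by linear_combination r1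
  have hg : g^2 = a^2 := by linear_combination ad - hc
  have hd : d^2 = -(2 * a^2) := by linear_combination c1 - hg
  exact ⟨by linear_combination c2, hc, by linear_combination dg, hg, hd,
    by linear_combination r2 - hd⟩

namespace IsMagicSquareOfSquares

variable {a b c d e f g h i T : ℤ}

theorem magic_sum_eq (hms : IsMagicSquareOfSquares a b c d e f g h i T) : T = 3 * e^2 := by
  obtain ⟨-, r1, r2, r3, -, c2, -, dg, ad⟩ := hms
  linarith

theorem isZeroSumSquareGrid_cast {R : Type*} [CommRing R]
    (hms : IsMagicSquareOfSquares a b c d e f g h i T) (he : (e : R) = 0) :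
    IsZeroSumSquareGrid (a : R) b c d e f g h i := by
  have hT : (T : R) = 0 := by rw [hms.magic_sum_eq]; push_cast; rw [he]; ring
  have line : ∀ x y z : ℤ, x^2 + y^2 + z^2 = T → (x : R)^2 + (y : R)^2 + (z : R)^2 = 0 :=
    fun x y z hxyz => by exact_mod_cast (congrArg (Int.cast : ℤ → R) hxyz).trans hT
  obtain ⟨-, r1, r2, r3, c1, c2, c3, dg, ad⟩ := hms
  exact ⟨line _ _ _ r1, line _ _ _ r2, line _ _ _ r3, line _ _ _ c1, line _ _ _ c2,
    line _ _ _ c3, line _ _ _ dg, line _ _ _ ad⟩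

end IsMagicSquareOfSquares

theorem IsPrimitive.not_forall_sq_cast_eq_zero {a b c d e f g h i : ℤ}
    (hprim : IsPrimitive a b c d e f g h i) {p : ℕ} (hp : p.Prime)
    (hzero : ∀ x ∈ [a, b, c, d, e, f, g, h, i], (x : ZMod p)^2 = 0) : False := by
  have hdvd : ∀ x ∈ [a, b, c, d, e, f, g, h, i], (p : ℤ) ∣ x^2 := fun x hx =>
    (ZMod.intCast_zmod_eq_zero_iff_dvd _ p).mp (by push_cast; exact hzero x hx)
  simp only [List.mem_cons, List.not_mem_nil, or_false, forall_eq_or_imp, forall_eq] at hdvd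
  obtain ⟨ha, hb, hc, hd, he, hf, hg, hh, hi⟩ := hdvd
  have h1 := Int.dvd_coe_gcd ha <| Int.dvd_coe_gcd hb <| Int.dvd_coe_gcd hc <|
    Int.dvd_coe_gcd hd <| Int.dvd_coe_gcd he <| Int.dvd_coe_gcd hf <| Int.dvd_coe_gcd hg <|
    Int.dvd_coe_gcd hh hi
  rw [hprim] at h1
  exact hp.not_dvd_one (by exact_mod_cast h1)

theorem isSquare_two_of_sq_eq_two_mul_sq {K : Type*} [Field K] {x y : K} (hy : y ≠ 0)
    (h : x^2 = 2 * y^2) : IsSquare (2 : K) :=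
  ⟨x / y, by field_simp; linear_combination -h⟩

theorem Nat.Prime.mod_eight_eq_one_of_isSquare_two {p : ℕ} (hp : p.Prime) (hp4 : p % 4 = 1)
    (h2 : IsSquare (2 : ZMod p)) : p % 8 = 1 := by
  have := Fact.mk hp
  have := (ZMod.exists_sq_eq_two_iff (by omega)).mp h2
  omega

theorem midedge_zero_residue_class (a b c d e f g h i T : ℤ)
    (hms : IsMagicSquareOfSquares a b c d e f g h i T)
    (hprim : IsPrimitive a b c d e f g h i)
    (p : ℕ) (hp : p.Prime) (hp1 : p % 4 = 1)
    (hde : (p : ℤ) ∣ e) (hdb : (p : ℤ) ∣ b) :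
    p % 8 = 1 ∧ (p : ℤ) ∣ h ∧ (a : ZMod p) ≠ 0 ∧
    (c : ZMod p)^2 = -(a : ZMod p)^2 ∧
    (i : ZMod p)^2 = -(a : ZMod p)^2 ∧
    (g : ZMod p)^2 = (a : ZMod p)^2 ∧
    (d : ZMod p)^2 = -(2 * (a : ZMod p)^2) ∧
    (f : ZMod p)^2 = 2 * (a : ZMod p)^2 := by
  have := Fact.mk hp
  have he : (e : ZMod p) = 0 := (ZMod.intCast_zmod_eq_zero_iff_dvd e p).mpr hde
  have hb : (b : ZMod p) = 0 := (ZMod.intCast_zmod_eq_zero_iff_dvd b p).mpr hdb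
  obtain ⟨hh, hc, hi, hg, hd, hf⟩ :=
    (hms.isZeroSumSquareGrid_cast he).sq_eq_of_center_eq_zero_of_top_eq_zero he hb
  have ha : (a : ZMod p) ≠ 0 := by
    intro ha
    simp only [ha, zero_pow two_ne_zero, mul_zero, neg_zero, pow_eq_zero_iff two_ne_zero]
      at hh hc hi hg hd hf
    exact hprim.not_forall_sq_cast_eq_zero hp (by simp [ha, hb, he, hh, hc, hi, hg, hd, hf])
  exact ⟨hp.mod_eight_eq_one_of_isSquare_two hp1 (isSquare_two_of_sq_eq_two_mul_sq ha hf),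
    (ZMod.intCast_zmod_eq_zero_iff_dvd h p).mp (pow_eq_zero_iff two_ne_zero |>.mp hh),
    ha, hc, hi, hg, hd, hf⟩
end

section
/- Let p be a prime with p ≡ 1 (mod 4). There exists a 3×3 matrix M over ZMod p such that every entry of M is a square in ZMod p, the central entry of M is 0, all eight other entries of M are nonzero, and every row, every column, and both main diagonals of M sum to 0, if and only if there exists n in ZMod p such that n, n+1, and n+2 are all nonzero squares in ZMod p. -/
/-!
A zero center and vanishing line sums force
`M = !![a, -(a + b), b; b - a, 0, a - b; -b, a + b, -a]`.
As `-1` is a square for `p ≡ 1 mod 4`, such a matrix exists iff `b, a - b, a, a + b` are nonzero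
squares for some `a, b`; dividing by `b` turns this progression into `n, n + 1, n + 2`, and
conversely `a = n + 1, b = 1` works.
-/

def zeroCenterMagic {A : Type*} [AddCommGroup A] (a b : A) : Matrix (Fin 3) (Fin 3) A :=
  !![a, -(a + b), b; b - a, 0, a - b; -b, a + b, -a]

theorem eq_zeroCenterMagic {A : Type*} [AddCommGroup A] {M : Matrix (Fin 3) (Fin 3) A}
    (h11 : M 1 1 = 0) (hr0 : M 0 0 + M 0 1 + M 0 2 = 0) (hr1 : M 1 0 + M 1 1 + M 1 2 = 0)
    (hr2 : M 2 0 + M 2 1 + M 2 2 = 0) (hc0 : M 0 0 + M 1 0 + M 2 0 = 0)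
    (hc1 : M 0 1 + M 1 1 + M 2 1 = 0) (hd : M 0 0 + M 1 1 + M 2 2 = 0) :
    M = zeroCenterMagic (M 0 0) (M 0 2) := by
  ext i j
  fin_cases i <;> fin_cases j <;> simp only [Fin.zero_eta, Fin.mk_one, Fin.reduceFinMk,
    zeroCenterMagic, Matrix.of_apply, Matrix.cons_val, Matrix.cons_val_zero, Matrix.cons_val_one] <;>
    grind

theorem zeroCenterMagic_apply_of_ne {A : Type*} [AddCommGroup A] {P : A → Prop}
    (hneg : ∀ x, P x → P (-x)) {a b : A} (ha : P a) (hb : P b) (hsub : P (a - b))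
    (hadd : P (a + b)) (i j : Fin 3) (hij : (i, j) ≠ (1, 1)) : P (zeroCenterMagic a b i j) := by
  fin_cases i <;> fin_cases j <;> simp [zeroCenterMagic, -neg_add_rev] at hij ⊢
  all_goals first
    | assumption
    | exact hneg _ ‹_›
    | (rw [← neg_sub]; exact hneg _ hsub)

theorem IsSquare.neg_of_isSquare_neg_one {R : Type*} [CommRing R] {x : R} (hx : IsSquare x)
    (h : IsSquare (-1 : R)) : IsSquare (-x) :=
  neg_one_mul x ▸ h.mul hx

theorem exists_consecutive_nonzero_squares {K : Type*} [Field K] {a b : K}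
    (hb : b ≠ 0 ∧ IsSquare b) (hsub : a - b ≠ 0 ∧ IsSquare (a - b))
    (ha : a ≠ 0 ∧ IsSquare a) (hadd : a + b ≠ 0 ∧ IsSquare (a + b)) :
    ∃ n : K, (n ≠ 0 ∧ IsSquare n) ∧ (n + 1 ≠ 0 ∧ IsSquare (n + 1)) ∧
      (n + 2 ≠ 0 ∧ IsSquare (n + 2)) := by
  obtain ⟨hb0, hbsq⟩ := hb
  have h1 : (a - b) / b + 1 = a / b := by field_simp; ring
  have h2 : (a - b) / b + 2 = (a + b) / b := by field_simp; ring
  refine ⟨(a - b) / b, ?_, h1 ▸ ?_, h2 ▸ ?_⟩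
  · exact ⟨div_ne_zero hsub.1 hb0, hsub.2.div hbsq⟩
  · exact ⟨div_ne_zero ha.1 hb0, ha.2.div hbsq⟩
  · exact ⟨div_ne_zero hadd.1 hb0, hadd.2.div hbsq⟩

theorem nontrivial_residue_class_iff_three_consecutive_qr
    (p : ℕ) (hp : p.Prime) (hp1 : p % 4 = 1) :
    (∃ M : Matrix (Fin 3) (Fin 3) (ZMod p),
      (∀ r c, IsSquare (M r c)) ∧
      M 1 1 = 0 ∧
      (∀ r c : Fin 3, (r, c) ≠ (1, 1) → M r c ≠ 0) ∧
      M 0 0 + M 0 1 + M 0 2 = 0 ∧ M 1 0 + M 1 1 + M 1 2 = 0 ∧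
      M 2 0 + M 2 1 + M 2 2 = 0 ∧ M 0 0 + M 1 0 + M 2 0 = 0 ∧
      M 0 1 + M 1 1 + M 2 1 = 0 ∧ M 0 2 + M 1 2 + M 2 2 = 0 ∧
      M 0 0 + M 1 1 + M 2 2 = 0 ∧ M 0 2 + M 1 1 + M 2 0 = 0) ↔
    (∃ n : ZMod p, (n ≠ 0 ∧ IsSquare n) ∧ (n + 1 ≠ 0 ∧ IsSquare (n + 1)) ∧
      (n + 2 ≠ 0 ∧ IsSquare (n + 2))) := by
  have : Fact p.Prime := ⟨hp⟩
  constructor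
  · rintro ⟨M, hsq, h11, hne, hr0, hr1, hr2, hc0, hc1, -, hd, -⟩
    obtain ⟨a, b, rfl⟩ : ∃ a b, M = zeroCenterMagic a b :=
      ⟨_, _, eq_zeroCenterMagic h11 hr0 hr1 hr2 hc0 hc1 hd⟩
    exact exists_consecutive_nonzero_squares ⟨hne 0 2 (by decide), hsq 0 2⟩
      ⟨hne 1 2 (by decide), hsq 1 2⟩ ⟨hne 0 0 (by decide), hsq 0 0⟩ ⟨hne 2 1 (by decide), hsq 2 1⟩
  · rintro ⟨n, hn, hn1, hn2⟩
    have hneg1 : IsSquare (-1 : ZMod p) := ZMod.exists_sq_eq_neg_one_iff.2 (by omega)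
    have entry := zeroCenterMagic_apply_of_ne (P := fun x : ZMod p ↦ x ≠ 0 ∧ IsSquare x)
      (fun x hx ↦ ⟨neg_ne_zero.2 hx.1, hx.2.neg_of_isSquare_neg_one hneg1⟩) (a := n + 1) (b := 1)
      hn1 ⟨one_ne_zero, IsSquare.one⟩ (by simpa using hn) (by rwa [add_assoc, one_add_one_eq_two])
    refine ⟨zeroCenterMagic (n + 1) 1, fun i j ↦ ?_, rfl, fun i j hij ↦ (entry i j hij).1, ?_⟩
    · rcases eq_or_ne (i, j) (1, 1) with hij | hij
      · obtain ⟨rfl, rfl⟩ := Prod.mk.inj hij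
        exact IsSquare.zero
      · exact (entry i j hij).2
    · and_intros <;> simp [zeroCenterMagic] <;> ring
end

section
/- If m is one of 2, 5, 13, or 17 and m divides the central value e of a primitive magic square of squares, then m also divides at least one of the values a, b, c, d, f, g, h, i. -/
lemma mss_key17 : ∀ x z : ZMod 17, IsSquare x → IsSquare z → IsSquare (-x-z) → IsSquare (z-x) →
    x = 0 ∨ -x-z = 0 ∨ z = 0 ∨ z-x = 0 := by decide

lemma mss_key13 : ∀ x z : ZMod 13, IsSquare x → IsSquare z → IsSquare (-x-z) → IsSquare (z-x) →
    x = 0 ∨ -x-z = 0 ∨ z = 0 ∨ z-x = 0 := by decide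

lemma mss_key5 : ∀ x z : ZMod 5, IsSquare x → IsSquare z → IsSquare (-x-z) → IsSquare (z-x) →
    x = 0 ∨ -x-z = 0 ∨ z = 0 ∨ z-x = 0 := by decide

lemma mss_key2 : ∀ x z : ZMod 2, IsSquare x → IsSquare z → IsSquare (-x-z) → IsSquare (z-x) →
    x = 0 ∨ -x-z = 0 ∨ z = 0 ∨ z-x = 0 := by decide

lemma mss_helper {p : ℕ}
    (hkey : ∀ x z : ZMod p, IsSquare x → IsSquare z → IsSquare (-x-z) → IsSquare (z-x) →
      x = 0 ∨ -x-z = 0 ∨ z = 0 ∨ z-x = 0)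
    (hp : Prime ((p : ℕ) : ℤ))
    (a b c d e : ℤ) (h1 : a^2 + b^2 + c^2 = 3*e^2) (hd : d^2 = e^2 + c^2 - a^2)
    (he : (p : ℤ) ∣ e) :
    (p : ℤ) ∣ a ∨ (p : ℤ) ∣ b ∨ (p : ℤ) ∣ c ∨ (p : ℤ) ∣ d := by
  have hE : ((e : ℤ) : ZMod p) = 0 := (ZMod.intCast_zmod_eq_zero_iff_dvd e p).mpr he
  have h1' : (a : ZMod p)^2 + (b : ZMod p)^2 + (c : ZMod p)^2 = 0 := by
    have h := congrArg (fun t : ℤ => (t : ZMod p)) h1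
    push_cast at h
    rw [hE] at h
    simpa using h
  have hd' : (d : ZMod p)^2 = (c : ZMod p)^2 - (a : ZMod p)^2 := by
    have h := congrArg (fun t : ℤ => (t : ZMod p)) hd
    push_cast at h
    rw [hE] at h
    simpa using h
  have hB : -(a : ZMod p)^2 - (c : ZMod p)^2 = (b : ZMod p)^2 := by linear_combination -h1'
  have hsq : ∀ x : ZMod p, IsSquare (x^2) := fun x => ⟨x, pow_two x⟩
  have final : ∀ x : ℤ, ((x : ZMod p))^2 = 0 → (p : ℤ) ∣ x := by
    intro x hx
    have : ((x^2 : ℤ) : ZMod p) = 0 := by push_cast; exact hx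
    exact hp.dvd_of_dvd_pow ((ZMod.intCast_zmod_eq_zero_iff_dvd (x^2) p).mp this)
  rcases hkey ((a : ZMod p)^2) ((c : ZMod p)^2) (hsq a) (hsq c)
      (hB ▸ hsq b) (hd'.symm ▸ hsq d) with h | h | h | h
  · exact Or.inl (final a h)
  · exact Or.inr (Or.inl (final b (by rw [← hB, h])))
  · exact Or.inr (Or.inr (Or.inl (final c h)))
  · exact Or.inr (Or.inr (Or.inr (final d (by rw [hd', h]))))

theorem small_divisor_of_center_divides_another (a b c d e f g h i T : ℤ)
    (hms : IsMagicSquareOfSquares a b c d e f g h i T)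
    (hprim : IsPrimitive a b c d e f g h i)
    (m : ℤ) (hm : m = 2 ∨ m = 5 ∨ m = 13 ∨ m = 17) (hme : m ∣ e) :
    m ∣ a ∨ m ∣ b ∨ m ∣ c ∨ m ∣ d ∨ m ∣ f ∨ m ∣ g ∨ m ∣ h ∨ m ∣ i := by
  obtain ⟨-, h1, h2, h3, h4, h5, h6, h7, h8⟩ := hms
  have hT : T = 3*e^2 := by linarith
  have h1' : a^2 + b^2 + c^2 = 3*e^2 := by linarith
  have hd : d^2 = e^2 + c^2 - a^2 := by linarith
  rcases hm with rfl | rfl | rfl | rfl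
  · have := mss_helper mss_key2 (by norm_num) a b c d e h1' hd (by exact_mod_cast hme)
    rcases this with hh | hh | hh | hh <;> norm_num at hh <;> tauto
  · have := mss_helper mss_key5 (by norm_num) a b c d e h1' hd (by exact_mod_cast hme)
    rcases this with hh | hh | hh | hh <;> norm_num at hh <;> tauto
  · have := mss_helper mss_key13 (by norm_num) a b c d e h1' hd (by exact_mod_cast hme)
    rcases this with hh | hh | hh | hh <;> norm_num at hh <;> tauto
  · have := mss_helper mss_key17 (by norm_num) a b c d e h1' hd (by exact_mod_cast hme)
    rcases this with hh | hh | hh | hh <;> norm_num at hh <;> tauto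
end

section
/- If p is a prime with p ≡ 1 (mod 20) or p ≡ 9 (mod 20), then there exists n in ZMod p such that n, n+1, and n+2 are all nonzero squares in ZMod p. -/
theorem consecutive_qr_of_one_or_nine_mod_twenty (p : ℕ) (hp : p.Prime)
    (hmod : p % 20 = 1 ∨ p % 20 = 9) :
    ∃ n : ZMod p, (n ≠ 0 ∧ IsSquare n) ∧ (n + 1 ≠ 0 ∧ IsSquare (n + 1)) ∧
      (n + 2 ≠ 0 ∧ IsSquare (n + 2)) := by
  haveI : Fact p.Prime := ⟨hp⟩
  haveI : Fact (Nat.Prime 5) := ⟨by norm_num⟩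
  have hp2 : p ≠ 2 := by rcases hmod with h | h <;> omega
  have hp3 : p ≠ 3 := by rcases hmod with h | h <;> omega
  have hp5 : p ≠ 5 := by rcases hmod with h | h <;> omega
  have h4 : p % 4 = 1 := by rcases hmod with h | h <;> omega
  have key : ∀ q : ℕ, q.Prime → p ≠ q → ((q : ℕ) : ZMod p) ≠ 0 := by
    intro q hq hne h
    exact hne ((Nat.prime_dvd_prime_iff_eq hp hq).mp
      ((ZMod.natCast_eq_zero_iff q p).mp h))
  have h2ne : (2 : ZMod p) ≠ 0 := by
    have := key 2 (by norm_num) hp2; exact_mod_cast this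
  have h3ne : (3 : ZMod p) ≠ 0 := by
    have := key 3 (by norm_num) hp3; exact_mod_cast this
  have h5ne : (5 : ZMod p) ≠ 0 := by
    have := key 5 (by norm_num) hp5; exact_mod_cast this
  have h4ne : (4 : ZMod p) ≠ 0 := by
    have : (4 : ZMod p) = 2 * 2 := by norm_num
    rw [this]; exact mul_ne_zero h2ne h2ne
  have hsq5mod : IsSquare ((p : ZMod 5)) := by
    rw [show ((p : ZMod 5)) = ((p % 5 : ℕ) : ZMod 5) from (ZMod.natCast_mod p 5).symm]
    have h5 : p % 5 = 1 ∨ p % 5 = 4 := by rcases hmod with h | h <;> omega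
    rcases h5 with h | h <;> rw [h]
    · exact ⟨1, by norm_num⟩
    · exact ⟨2, by norm_num⟩
  have h5sq : IsSquare (5 : ZMod p) := by
    have : IsSquare ((5 : ℕ) : ZMod p) :=
      (ZMod.exists_sq_eq_prime_iff_of_mod_four_eq_one h4 (by norm_num)).mpr hsq5mod
    exact_mod_cast this
  refine ⟨(4 : ZMod p)⁻¹, ⟨inv_ne_zero h4ne, ⟨(2 : ZMod p)⁻¹, ?_⟩⟩, ⟨?_, ?_⟩, ⟨?_, ?_⟩⟩
  · field_simp
    norm_num
  · intro h
    have : (5 : ZMod p) = 0 := by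
      have h' := congrArg (· * (4 : ZMod p)) h
      simp only [zero_mul] at h'
      rw [add_mul, inv_mul_cancel₀ h4ne] at h'
      linear_combination h'
    exact h5ne this
  · have : (4 : ZMod p)⁻¹ + 1 = 5 * ((2 : ZMod p)⁻¹ * (2 : ZMod p)⁻¹) := by
      field_simp
      ring
    rw [this]
    exact h5sq.mul ⟨_, rfl⟩
  · intro h
    have : (3 : ZMod p) * 3 = 0 := by
      have h' := congrArg (· * (4 : ZMod p)) h
      simp only [zero_mul] at h'
      rw [add_mul, inv_mul_cancel₀ h4ne] at h'
      linear_combination h'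
    rcases mul_eq_zero.mp this with h' | h' <;> exact h3ne h'
  · refine ⟨3 * (2 : ZMod p)⁻¹, ?_⟩
    field_simp
    ring
end

section
/- If p is a prime with p ≠ 5 and p ≡ 1 (mod 24) or p ≡ 5 (mod 24), then there exists n in ZMod p such that n, n+1, and n+2 are all nonzero squares in ZMod p. -/
/-!
For `p ≡ 1, 5 (mod 24)` we have `p ≡ 1 (mod 4)`, so by the supplementary law and quadratic
reciprocity `2` is a square mod `p` iff `p ≡ 1 (mod 8)` iff `p ≡ 1 (mod 3)` iff `3` is a square
mod `p`. If both are squares, take `1, 2, 3`. Otherwise `6` is a square, being a product of two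
nonsquares, and then either `4, 5, 6` or `6, 15, 24` (with `15 = 3 · 5` a product of two
nonsquares) are nonzero squares in arithmetic progression whose common difference is a square;
dividing by the difference gives three consecutive nonzero squares.
-/

section Field

variable {F : Type*} [Field F]

def IsNonzeroSquare (x : F) : Prop := x ≠ 0 ∧ IsSquare x

lemma IsNonzeroSquare.mul {a b : F} (ha : IsNonzeroSquare a) (hb : IsNonzeroSquare b) :
    IsNonzeroSquare (a * b) :=
  ⟨mul_ne_zero ha.1 hb.1, ha.2.mul hb.2⟩

lemma IsNonzeroSquare.div {a b : F} (ha : IsNonzeroSquare a) (hb : IsNonzeroSquare b) :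
    IsNonzeroSquare (a / b) :=
  ⟨div_ne_zero ha.1 hb.1, ha.2.div hb.2⟩

lemma isNonzeroSquare_sq {a : F} (ha : a ≠ 0) : IsNonzeroSquare (a ^ 2) :=
  ⟨pow_ne_zero 2 ha, .sq a⟩

lemma isNonzeroSquare_mul_of_not_isSquare [Fintype F] {a b : F} (ha : ¬IsSquare a)
    (hb : ¬IsSquare b) : IsNonzeroSquare (a * b) := by
  classical
  have ha0 : a ≠ 0 := by rintro rfl; exact ha .zero
  have hb0 : b ≠ 0 := by rintro rfl; exact hb .zero
  refine ⟨mul_ne_zero ha0 hb0, (quadraticChar_one_iff_isSquare (mul_ne_zero ha0 hb0)).mp ?_⟩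
  rw [map_mul, quadraticChar_neg_one_iff_not_isSquare.mpr ha,
    quadraticChar_neg_one_iff_not_isSquare.mpr hb, neg_one_mul, neg_neg]

lemma exists_consecutive_of_progression {a d : F} (ha : IsNonzeroSquare a)
    (had : IsNonzeroSquare (a + d)) (ha2d : IsNonzeroSquare (a + 2 * d))
    (hd : IsNonzeroSquare d) :
    ∃ n : F, IsNonzeroSquare n ∧ IsNonzeroSquare (n + 1) ∧ IsNonzeroSquare (n + 2) := by
  refine ⟨a / d, ha.div hd, ?_, ?_⟩
  · convert had.div hd using 1
    field_simp [hd.1]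
  · convert ha2d.div hd using 1
    field_simp [hd.1]

lemma exists_consecutive_nonzero_squares_s15 [Fintype F] (h2 : (2 : F) ≠ 0) (h3 : (3 : F) ≠ 0)
    (h5 : (5 : F) ≠ 0) (h23 : IsSquare (2 : F) ↔ IsSquare (3 : F)) :
    ∃ n : F, IsNonzeroSquare n ∧ IsNonzeroSquare (n + 1) ∧ IsNonzeroSquare (n + 2) := by
  have one : IsNonzeroSquare (1 : F) := ⟨one_ne_zero, .one⟩
  by_cases hs2 : IsSquare (2 : F)
  · refine ⟨1, one, ⟨?_, ?_⟩, ⟨?_, ?_⟩⟩ <;> norm_num [h2, h3, hs2, h23.mp hs2]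
  have six : IsNonzeroSquare (6 : F) := by
    convert isNonzeroSquare_mul_of_not_isSquare hs2 (h23.not.mp hs2) using 1
    norm_num
  by_cases hs5 : IsSquare (5 : F)
  · refine exists_consecutive_of_progression (a := 4) (d := 1) ?_ ?_ ?_ one
    · convert isNonzeroSquare_sq h2 using 1
      norm_num
    · exact ⟨by norm_num [h5], by norm_num [hs5]⟩
    · convert six using 1
      norm_num
  · refine exists_consecutive_of_progression (a := 6) (d := 3 ^ 2) six ?_ ?_ (isNonzeroSquare_sq h3)
    · convert isNonzeroSquare_mul_of_not_isSquare (h23.not.mp hs2) hs5 using 1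
      norm_num
    · convert (isNonzeroSquare_sq h2).mul six using 1
      norm_num

end Field

namespace ZMod

lemma natCast_ne_zero_of_prime {p q : ℕ} (hp : p.Prime) (hq : q.Prime) (hpq : p ≠ q) :
    (q : ZMod p) ≠ 0 := by
  rw [Ne, natCast_eq_zero_iff, Nat.prime_dvd_prime_iff_eq hp hq]
  exact hpq

lemma isSquare_natCast_three_iff (n : ℕ) : IsSquare (n : ZMod 3) ↔ n % 3 ≠ 2 := by
  rw [← natCast_mod]
  have : n % 3 < 3 := n.mod_lt (by norm_num)
  interval_cases n % 3 <;> decide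

lemma isSquare_two_iff_isSquare_three {p : ℕ} [Fact p.Prime] (hp : p % 24 = 1 ∨ p % 24 = 5) :
    IsSquare (2 : ZMod p) ↔ IsSquare (3 : ZMod p) := by
  have h3 : IsSquare ((3 : ℕ) : ZMod p) ↔ IsSquare (p : ZMod 3) :=
    exists_sq_eq_prime_iff_of_mod_four_eq_one (by omega) (by norm_num)
  rw [Nat.cast_ofNat] at h3
  rw [exists_sq_eq_two_iff (by omega), h3, isSquare_natCast_three_iff]
  omega

end ZMod

theorem consecutive_qr_of_one_or_five_mod_twentyfour (p : ℕ) (hp : p.Prime)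
    (hp5 : p ≠ 5) (hmod : p % 24 = 1 ∨ p % 24 = 5) :
    ∃ n : ZMod p, (n ≠ 0 ∧ IsSquare n) ∧ (n + 1 ≠ 0 ∧ IsSquare (n + 1)) ∧
      (n + 2 ≠ 0 ∧ IsSquare (n + 2)) := by
  have := Fact.mk hp
  have h2 : ((2 : ℕ) : ZMod p) ≠ 0 := ZMod.natCast_ne_zero_of_prime hp Nat.prime_two (by omega)
  have h3 : ((3 : ℕ) : ZMod p) ≠ 0 := ZMod.natCast_ne_zero_of_prime hp Nat.prime_three (by omega)
  have h5 : ((5 : ℕ) : ZMod p) ≠ 0 := ZMod.natCast_ne_zero_of_prime hp Nat.prime_five hp5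
  rw [Nat.cast_ofNat] at h2 h3 h5
  exact exists_consecutive_nonzero_squares_s15 h2 h3 h5 (ZMod.isSquare_two_iff_isSquare_three hmod)
end
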